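/- For all (x,t) ∈ ℝ², the second-order non-symmetric rogue wave satisfies |q^[2](x,t)| < 5. Thus the maximal amplitude amplification of the non-symmetric second-order rogue wave (equal to about 4.695, attained at (0.372, 0)) is strictly smaller than the amplification factor 5 of the symmetric second-order Akhmediev–Peregrine solution. -/

import Mathlib

/-!
Write `F2 = 12i√2 (A + iB)`. Since `|e^{2it}| = 1` and `√2 F2 = 24(-B + iA)`, we get
`|q|² H2² = (H2 - 24B)² + (24A)²`, and by a difference of squares
`25 H2² - |q|² H2² = 24 ((H2 + 6B)(H2 - 4B) - 24A²)`.
As `A` is odd and `B`, `H2` are even in `t`, both `H2` and this gap are polynomials in `s = t²`;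
in the variable `u = x - 1/2` each of their coefficients is a univariate polynomial that is
positive on all of `ℝ`, so both are positive for `s ≥ 0`.
-/

open Complex

noncomputable section

/-- The denominator `H2` of the second-order non-symmetric rogue wave. -/
def H2 (x t : ℝ) : ℝ :=
  1024 * t ^ 6 + 768 * x ^ 2 * t ^ 4 - 768 * t ^ 4 * x + 1920 * t ^ 4
    + 192 * x ^ 4 * t ^ 2 - 384 * x ^ 3 * t ^ 2 + 288 * x * t ^ 2 + 288 * t ^ 2
    + 16 * x ^ 6 - 48 * x ^ 5 + 72 * x ^ 4 - 72 * x ^ 3 + 72 * x ^ 2 - 36 * x + 9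

/-- The numerator `F2` of the second-order non-symmetric rogue wave:
`F2 = 12i√2·(A + i·B)` with real polynomials `A`, `B`. -/
def F2 (x t : ℝ) : ℂ :=
  12 * Complex.I * ((Real.sqrt 2 : ℝ) : ℂ) *
    (((12 * t - 32 * t ^ 3 - 12 * x * t + 16 * x ^ 3 * t + 64 * t ^ 3 * x - 8 * x ^ 4 * t
          - 64 * x ^ 2 * t ^ 3 - 128 * t ^ 5 : ℝ) : ℂ)
      + Complex.I *
        ((48 * x ^ 2 * t ^ 2 - 4 * x ^ 3 + 6 * x ^ 2 + 160 * t ^ 4 - 48 * x * t ^ 2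
            + 48 * t ^ 2 + 2 * x ^ 4 - 3 * x : ℝ) : ℂ))

/-- The second-order non-symmetric doubly-localized rogue wave
`q^[2](x,t) = √2·(√2/2 + F2/H2)·e^{2it}` of the focusing NLS equation. -/
def qtwo (p : ℝ × ℝ) : ℂ :=
  ((Real.sqrt 2 : ℝ) : ℂ)
    * (((Real.sqrt 2 / 2 : ℝ) : ℂ) + F2 p.1 p.2 / ((H2 p.1 p.2 : ℝ) : ℂ))
    * Complex.exp (2 * Complex.I * (p.2 : ℂ))

def A2 (x t : ℝ) : ℝ :=
  12 * t - 32 * t ^ 3 - 12 * x * t + 16 * x ^ 3 * t + 64 * t ^ 3 * x - 8 * x ^ 4 * t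
    - 64 * x ^ 2 * t ^ 3 - 128 * t ^ 5

def B2 (x t : ℝ) : ℝ :=
  48 * x ^ 2 * t ^ 2 - 4 * x ^ 3 + 6 * x ^ 2 + 160 * t ^ 4 - 48 * x * t ^ 2
    + 48 * t ^ 2 + 2 * x ^ 4 - 3 * x

theorem F2_eq (x t : ℝ) : F2 x t = 12 * I * (√2 : ℝ) * (A2 x t + I * B2 x t) := rfl

theorem ofReal_sqrt_two_sq : ((√2 : ℝ) : ℂ) ^ 2 = 2 := by
  norm_cast
  simp

theorem ofReal_sqrt_two_mul_F2 (x t : ℝ) :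
    ((√2 : ℝ) : ℂ) * F2 x t = ((-24 * B2 x t : ℝ) : ℂ) + ((24 * A2 x t : ℝ) : ℂ) * I := by
  rw [F2_eq]
  push_cast
  linear_combination (12 * I * (A2 x t + I * B2 x t)) * ofReal_sqrt_two_sq + 24 * B2 x t * I_sq

theorem norm_qtwo_sq {x t : ℝ} (hH : H2 x t ≠ 0) :
    ‖qtwo (x, t)‖ ^ 2 = ((H2 x t - 24 * B2 x t) ^ 2 + (24 * A2 x t) ^ 2) / H2 x t ^ 2 := by
  have hHc : (H2 x t : ℂ) ≠ 0 := ofReal_ne_zero.mpr hH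
  have hamp : ((√2 : ℝ) : ℂ) * (((√2 / 2 : ℝ) : ℂ) + F2 x t / (H2 x t : ℂ))
      = (((H2 x t - 24 * B2 x t) / H2 x t : ℝ) : ℂ) + ((24 * A2 x t / H2 x t : ℝ) : ℂ) * I := by
    rw [mul_add, ← mul_div_assoc, ofReal_sqrt_two_mul_F2]
    push_cast
    field_simp
    linear_combination (H2 x t : ℂ) * ofReal_sqrt_two_sq
  rw [qtwo, norm_mul, norm_exp, show (2 * I * (t : ℂ)).re = 0 by simp, Real.exp_zero, mul_one,
    hamp, Complex.sq_norm, normSq_add_mul_I, div_pow, div_pow, add_div]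

theorem sum_mul_pow_pos {R : Type*} [CommSemiring R] [PartialOrder R] [IsStrictOrderedRing R]
    {n : ℕ} {c : Fin (n + 1) → R} (h0 : 0 < c 0) (hc : ∀ k, 0 ≤ c k) {s : R} (hs : 0 ≤ s) :
    0 < ∑ k, c k * s ^ (k : ℕ) :=
  Finset.sum_pos' (fun k _ => mul_nonneg (hc k) (pow_nonneg hs _))
    ⟨0, Finset.mem_univ _, by simpa using h0⟩

def H2Coeff (u : ℝ) : Fin 4 → ℝ :=
  ![16 * u ^ 6 + 12 * u ^ 4 - 8 * u ^ 3 + 27 * u ^ 2 + 6 * u + 13 / 4,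
    12 * (16 * u ^ 4 - 24 * u ^ 2 + 8 * u + 33),
    192 * (4 * u ^ 2 + 9),
    1024]

theorem H2_eq_sum (x t : ℝ) : H2 x t = ∑ k, H2Coeff (x - 1 / 2) k * (t ^ 2) ^ (k : ℕ) := by
  simp only [Fin.sum_univ_four, H2Coeff, Matrix.cons_val, Fin.coe_ofNat_eq_mod, Nat.reduceMod, H2]
  ring

theorem H2Coeff_pos (u : ℝ) (k : Fin 4) : 0 < H2Coeff u k := by
  fin_cases k <;> simp only [H2Coeff, Fin.reduceFinMk, Fin.zero_eta, Fin.mk_one, Matrix.cons_val]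
  · nlinarith [sq_nonneg (u ^ 3), sq_nonneg (u ^ 2 - u / 3)]
  · nlinarith [sq_nonneg (u + 1 / 2), sq_nonneg (u ^ 2 - 3 / 4)]
  all_goals positivity

theorem H2_pos (x t : ℝ) : 0 < H2 x t :=
  H2_eq_sum x t ▸ sum_mul_pow_pos (H2Coeff_pos _ 0) (fun k => (H2Coeff_pos _ k).le) (sq_nonneg t)

/-- The constant coefficient is `(H2 + 6 B2) (H2 - 4 B2)` at `t = 0`, where `A2` vanishes. -/
def amplitudeGapCoeff (u : ℝ) : Fin 7 → ℝ :=
  ![(16 * u ^ 6 + 24 * u ^ 4 - 8 * u ^ 3 + 45 * u ^ 2 + 12 * u + 1)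
      * (16 * u ^ 6 + 4 * u ^ 4 - 8 * u ^ 3 + 15 * u ^ 2 + 2 * u + 19 / 4),
    3 * (2048 * u ^ 10 - 1280 * u ^ 8 + 6144 * u ^ 6 + 2560 * u ^ 5 - 4704 * u ^ 4
      - 1536 * u ^ 3 + 5560 * u ^ 2 + 2080 * u + 603),
    16 * (3840 * u ^ 8 - 2176 * u ^ 6 + 1536 * u ^ 5 + 17472 * u ^ 4 - 4864 * u ^ 3
      - 9912 * u ^ 2 + 6144 * u + 10865),
    512 * (640 * u ^ 6 + 464 * u ^ 4 + 256 * u ^ 3 - 1056 * u ^ 2 + 688 * u + 2713),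
    24576 * (40 * u ^ 4 + 82 * u ^ 2 + 8 * u + 151),
    65536 * (24 * u ^ 2 + 53),
    1048576]

theorem twentyfive_mul_H2_sq_sub_eq_sum (x t : ℝ) :
    25 * H2 x t ^ 2 - ((H2 x t - 24 * B2 x t) ^ 2 + (24 * A2 x t) ^ 2)
      = 24 * ∑ k, amplitudeGapCoeff (x - 1 / 2) k * (t ^ 2) ^ (k : ℕ) := by
  simp only [Fin.sum_univ_seven, amplitudeGapCoeff, Matrix.cons_val, Fin.coe_ofNat_eq_mod,
    Nat.reduceMod, H2, A2, B2]
  ring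

theorem amplitudeGapCoeff_pos (u : ℝ) (k : Fin 7) : 0 < amplitudeGapCoeff u k := by
  fin_cases k <;>
    simp only [amplitudeGapCoeff, Fin.reduceFinMk, Fin.zero_eta, Fin.mk_one, Matrix.cons_val]
  · exact mul_pos
      (by nlinarith [sq_nonneg (u ^ 3), sq_nonneg (u ^ 2 - u / 6), sq_nonneg (u + 18 / 133)])
      (by nlinarith [sq_nonneg (u ^ 3), sq_nonneg (u + 1 / 8)])
  · nlinarith [sq_nonneg (u ^ 3 + u ^ 2 / 2), sq_nonneg (u ^ 2 - u), sq_nonneg (u + 1 / 5),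
      sq_nonneg (u ^ 3 - u), sq_nonneg (u ^ 4 - u ^ 2)]
  · nlinarith [sq_nonneg (u ^ 2 - u), sq_nonneg (u ^ 2 - 1 / 2), sq_nonneg (u + 1 / 5),
      sq_nonneg (u ^ 3 - u)]
  · nlinarith [sq_nonneg (u - 1), sq_nonneg (u + 1 / 2), sq_nonneg (u ^ 3 - u)]
  · nlinarith [sq_nonneg (u + 1 / 20)]
  all_goals positivity

/-- the second-order non-symmetric rogue wave satisfies `|q^[2](x,t)| < 5`
everywhere: its maximal amplification is strictly smaller than the factor `5` of the
symmetric second-order Akhmediev–Peregrine solution. -/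
theorem qtwo_amplitude_lt_five : ∀ x t : ℝ, ‖qtwo (x, t)‖ < 5 := by
  intro x t
  have hH := H2_pos x t
  have hgap : 0 < ∑ k, amplitudeGapCoeff (x - 1 / 2) k * (t ^ 2) ^ (k : ℕ) :=
    sum_mul_pow_pos (amplitudeGapCoeff_pos _ 0) (fun k => (amplitudeGapCoeff_pos _ k).le)
      (sq_nonneg t)
  have hsq : ‖qtwo (x, t)‖ ^ 2 < 5 ^ 2 := by
    rw [norm_qtwo_sq hH.ne', div_lt_iff₀ (by positivity)]
    linarith [twentyfive_mul_H2_sq_sub_eq_sum x t]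
  exact lt_of_pow_lt_pow_left₀ 2 (by norm_num) hsq
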